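/- Proposition 1 (interventional version): Let f : (Fin p → ℝ) → ℝ be additive in coordinate j', i.e. f(x) = g(x_{j'}) + r(x) with r not depending on coordinate j', and let x^(1), …, x^(n) : Fin p → ℝ (n ≥ 1) be a background dataset. Then there exists c ∈ ℝ such that for every point x : Fin p → ℝ, the interventional SHAP value of feature j' at x equals PD_{j'}(x_{j'}) + c, where PD_{j'} is the empirical partial dependence function of feature j'; moreover one may take c = −(1/n) Σ_{i=1}^n f(x^(i)). -/

import Mathlib

/-!
The marginal contribution of feature `j'` to the interventional value function does not depend
on the coalition: adding `j'` only changes coordinate `j'`, so by additivity it changes `f` by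
`g (x j') - g (X i j')`, averaged over the background data. Since the Shapley weights sum to one,
the Shapley value is this constant, and the same average is `PD_{j'}(x j') - (1/n) Σ_i f (X i)`.
-/

/-- The Shapley value of player `j` for the value function `v`. -/
noncomputable def shapley {p : ℕ} (v : Finset (Fin p) → ℝ) (j : Fin p) : ℝ :=
  ∑ S ∈ (Finset.univ.erase j).powerset,
    (((S.card.factorial * (p - S.card - 1).factorial : ℕ) : ℝ) / (p.factorial : ℝ)) *
      (v (S ∪ {j}) - v S)

/-- `f` does not depend on coordinate `j`: `f x = f y` whenever `x k = y k` for all `k ≠ j`. -/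
def NotDependsOn {p : ℕ} (f : (Fin p → ℝ) → ℝ) (j : Fin p) : Prop :=
  ∀ x y : Fin p → ℝ, (∀ k : Fin p, k ≠ j → x k = y k) → f x = f y

/-- The interventional contribution function of the model `f` at point `x`, with
background dataset `X 1, …, X n`: coordinates in `S` are taken from `x`, the
remaining ones from the background observations. -/
noncomputable def interv {p n : ℕ} (f : (Fin p → ℝ) → ℝ) (X : Fin n → Fin p → ℝ)
    (x : Fin p → ℝ) (S : Finset (Fin p)) : ℝ :=
  (1 / n : ℝ) * ∑ i : Fin n, f (S.piecewise x (X i))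

/-- The empirical partial dependence function of feature `j` for the model `f` with
background dataset `X 1, …, X n`. -/
noncomputable def pdep {p n : ℕ} (f : (Fin p → ℝ) → ℝ) (X : Fin n → Fin p → ℝ)
    (j : Fin p) (t : ℝ) : ℝ :=
  (1 / n : ℝ) * ∑ i : Fin n, f (Function.update (X i) j t)

open Finset
open scoped Nat

theorem sum_powerset_factorial_mul_factorial_div {β : Type*} (s : Finset β) :
    ∑ S ∈ s.powerset, (((#S)! * (#s - #S)! : ℕ) : ℝ) / ((#s + 1)! : ℝ) = 1 := by
  rw [sum_powerset_apply_card (fun m => ((m ! * (#s - m)! : ℕ) : ℝ) / ((#s + 1)! : ℝ))]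
  have hterm : ∀ m ∈ range (#s + 1),
      (#s).choose m • (((m ! * (#s - m)! : ℕ) : ℝ) / ((#s + 1)! : ℝ)) = 1 / (#s + 1) := by
    intro m hm
    have hchoose := Nat.choose_mul_factorial_mul_factorial (Nat.lt_succ_iff.mp (mem_range.mp hm))
    rw [nsmul_eq_mul, ← mul_div_assoc, Nat.factorial_succ]
    push_cast
    rw [← mul_assoc, ← Nat.cast_mul, ← Nat.cast_mul, hchoose]
    field_simp
  rw [sum_congr rfl hterm, sum_const, card_range, nsmul_eq_mul]
  push_cast
  field_simp

theorem shapley_eq_of_marginal_eq {p : ℕ} (v : Finset (Fin p) → ℝ) (j : Fin p) (d : ℝ)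
    (hv : ∀ S : Finset (Fin p), j ∉ S → v (S ∪ {j}) - v S = d) : shapley v j = d := by
  have hcard : #(univ.erase j) + 1 = p := by
    rw [card_erase_of_mem (mem_univ j), card_univ, Fintype.card_fin]
    exact Nat.sub_add_cancel j.pos
  have hweight : ∀ S ∈ (univ.erase j).powerset,
      ((((#S)! * (p - #S - 1)! : ℕ) : ℝ) / (p ! : ℝ)) * (v (S ∪ {j}) - v S)
        = ((((#S)! * (#(univ.erase j) - #S)! : ℕ) : ℝ) / ((#(univ.erase j) + 1)! : ℝ)) * d := by
    intro S hS
    rw [hv S fun h => (mem_erase.mp (mem_powerset.mp hS h)).1 rfl, hcard,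
      show p - #S - 1 = #(univ.erase j) - #S by omega]
  rw [shapley, sum_congr rfl hweight, ← sum_mul, sum_powerset_factorial_mul_factorial_div,
    one_mul]

theorem NotDependsOn.sub_eq_of_additive {p : ℕ} {f r : (Fin p → ℝ) → ℝ} {g : ℝ → ℝ}
    {j : Fin p} (hr : NotDependsOn r j) (hf : ∀ x, f x = g (x j) + r x) {x y : Fin p → ℝ}
    (hxy : ∀ k, k ≠ j → x k = y k) : f x - f y = g (x j) - g (y j) := by
  rw [hf x, hf y, hr x y hxy]
  ring

theorem interv_union_singleton_sub {p n : ℕ} {f r : (Fin p → ℝ) → ℝ} {g : ℝ → ℝ}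
    {j : Fin p} (hr : NotDependsOn r j) (hf : ∀ x, f x = g (x j) + r x)
    (X : Fin n → Fin p → ℝ) (x : Fin p → ℝ) {S : Finset (Fin p)} (hS : j ∉ S) :
    interv f X x (S ∪ {j}) - interv f X x S = (1 / n : ℝ) * ∑ i, (g (x j) - g (X i j)) := by
  rw [interv, interv, ← mul_sub, ← sum_sub_distrib]
  congr 1
  refine sum_congr rfl fun i _ => ?_
  have hagree : ∀ k, k ≠ j → (S ∪ {j}).piecewise x (X i) k = S.piecewise x (X i) k := by
    intro k hk
    simp only [piecewise, mem_union, mem_singleton, hk, or_false]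
  rw [hr.sub_eq_of_additive hf hagree, piecewise_eq_of_mem _ _ _ (mem_union_right _
    (mem_singleton_self j)), piecewise_eq_of_notMem _ _ _ hS]

theorem pdep_sub_mean {p n : ℕ} {f r : (Fin p → ℝ) → ℝ} {g : ℝ → ℝ} {j : Fin p}
    (hr : NotDependsOn r j) (hf : ∀ x, f x = g (x j) + r x) (X : Fin n → Fin p → ℝ) (t : ℝ) :
    pdep f X j t - (1 / n : ℝ) * ∑ i, f (X i) = (1 / n : ℝ) * ∑ i, (g t - g (X i j)) := by
  rw [pdep, ← mul_sub, ← sum_sub_distrib]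
  congr 1
  refine sum_congr rfl fun i _ => ?_
  rw [hr.sub_eq_of_additive hf fun k hk => Function.update_of_ne hk _ _, Function.update_self]

theorem interventional_shap_eq_pdep_of_additive_general {p n : ℕ}
    (f : (Fin p → ℝ) → ℝ) (g : ℝ → ℝ) (r : (Fin p → ℝ) → ℝ) (j' : Fin p)
    (hr : NotDependsOn r j') (hf : ∀ x : Fin p → ℝ, f x = g (x j') + r x)
    (X : Fin n → Fin p → ℝ) :
    ∃ c : ℝ,
      (∀ x : Fin p → ℝ, shapley (interv f X x) j' = pdep f X j' (x j') + c) ∧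
        c = -((1 / n : ℝ) * ∑ i : Fin n, f (X i)) := by
  refine ⟨_, fun x => ?_, rfl⟩
  rw [shapley_eq_of_marginal_eq _ _ _ fun S hS => interv_union_singleton_sub hr hf X x hS,
    ← pdep_sub_mean hr hf X (x j')]
  ring

/-- Proposition 1, interventional version: if `f` is additive in
coordinate `j'`, i.e. `f x = g (x j') + r x` with `r` not depending on coordinate
`j'`, then there exists `c ∈ ℝ` such that for every point `x`, the interventional
SHAP value of feature `j'` at `x` equals `PD_{j'}(x j') + c`; moreover one may take
`c = -(1/n) Σ_i f (X i)`. -/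
theorem interventional_shap_eq_pdep_of_additive {p n : ℕ} (hn : 1 ≤ n)
    (f : (Fin p → ℝ) → ℝ) (g : ℝ → ℝ) (r : (Fin p → ℝ) → ℝ) (j' : Fin p)
    (hr : NotDependsOn r j') (hf : ∀ x : Fin p → ℝ, f x = g (x j') + r x)
    (X : Fin n → Fin p → ℝ) :
    ∃ c : ℝ,
      (∀ x : Fin p → ℝ, shapley (interv f X x) j' = pdep f X j' (x j') + c) ∧
        c = -((1 / n : ℝ) * ∑ i : Fin n, f (X i)) :=
  interventional_shap_eq_pdep_of_additive_general f g r j' hr hf X
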